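/- For every ε ∈ (0, 1) and all integers l₁, l₂ with 2 ≤ l₁ < l₂ one has K_ε(l₁) < K_ε(l₂). -/
import Mathlib


open Real

/-- `a_l = (l + √(l² − 4))/2`. -/
noncomputable def al (l : ℝ) : ℝ := (l + Real.sqrt (l ^ 2 - 4)) / 2

/-- `K_ε(l)`, the ε-norm of the derived category of the `l`-Kronecker quiver. -/
noncomputable def Keps (ε l : ℝ) : ℝ :=
  Real.arccos ((Real.cos (π * ε) - al l) /
      Real.sqrt ((al l) ^ 2 + 1 - 2 * al l * Real.cos (π * ε))) -
    Real.arccos ((al l * Real.cos (π * ε) - 1) /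
      Real.sqrt ((al l) ^ 2 + 1 - 2 * al l * Real.cos (π * ε)))

section aux

variable {t a b : ℝ}

private lemma csq_pos (ht : -1 < t) (ht' : t < 1) (ha : 1 ≤ a) :
    0 < a ^ 2 + 1 - 2 * a * t := by nlinarith [sq_nonneg (a - t)]

private lemma c_pos (ht : -1 < t) (ht' : t < 1) (ha : 1 ≤ a) :
    0 < Real.sqrt (a ^ 2 + 1 - 2 * a * t) :=
  Real.sqrt_pos.2 (csq_pos ht ht' ha)

private lemma c_sq (ht : -1 < t) (ht' : t < 1) (ha : 1 ≤ a) :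
    (Real.sqrt (a ^ 2 + 1 - 2 * a * t)) ^ 2 = a ^ 2 + 1 - 2 * a * t :=
  Real.sq_sqrt (le_of_lt (csq_pos ht ht' ha))

/-- membership of `(t - a)/c` in `[-1,1]`. -/
private lemma mem1 (ht : -1 < t) (ht' : t < 1) (ha : 1 ≤ a) :
    (t - a) / Real.sqrt (a ^ 2 + 1 - 2 * a * t) ∈ Set.Icc (-1 : ℝ) 1 := by
  have hc := c_pos ht ht' ha
  have hc2 := c_sq ht ht' ha
  set c := Real.sqrt (a ^ 2 + 1 - 2 * a * t) with hcdef
  have habs : |t - a| ≤ c := by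
    have h1 : (t - a) ^ 2 ≤ c ^ 2 := by nlinarith
    calc |t - a| = Real.sqrt ((t - a) ^ 2) := (Real.sqrt_sq_eq_abs _).symm
      _ ≤ Real.sqrt (c ^ 2) := Real.sqrt_le_sqrt h1
      _ = c := Real.sqrt_sq hc.le
  rw [abs_le] at habs
  constructor
  · rw [le_div_iff₀ hc]; linarith [habs.1]
  · rw [div_le_one hc]; exact habs.2

/-- membership of `(a*t - 1)/c` in `[-1,1]`. -/
private lemma mem2 (ht : -1 < t) (ht' : t < 1) (ha : 1 ≤ a) :
    (a * t - 1) / Real.sqrt (a ^ 2 + 1 - 2 * a * t) ∈ Set.Icc (-1 : ℝ) 1 := by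
  have hc := c_pos ht ht' ha
  have hc2 := c_sq ht ht' ha
  set c := Real.sqrt (a ^ 2 + 1 - 2 * a * t) with hcdef
  have habs : |a * t - 1| ≤ c := by
    have h1 : (a * t - 1) ^ 2 ≤ c ^ 2 := by
      have hs : (0:ℝ) ≤ 1 - t ^ 2 := by nlinarith
      nlinarith [mul_nonneg (sq_nonneg a) hs]
    calc |a * t - 1| = Real.sqrt ((a * t - 1) ^ 2) := (Real.sqrt_sq_eq_abs _).symm
      _ ≤ Real.sqrt (c ^ 2) := Real.sqrt_le_sqrt h1
      _ = c := Real.sqrt_sq hc.le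
  rw [abs_le] at habs
  constructor
  · rw [le_div_iff₀ hc]; linarith [habs.1]
  · rw [div_le_one hc]; exact habs.2

/-- The first arccos argument is strictly decreasing in `a`. -/
private lemma arg1_lt (ht : -1 < t) (ht' : t < 1) (ha : 1 ≤ a) (hab : a < b) :
    (t - b) / Real.sqrt (b ^ 2 + 1 - 2 * b * t) <
      (t - a) / Real.sqrt (a ^ 2 + 1 - 2 * a * t) := by
  have hb : 1 ≤ b := le_of_lt (lt_of_le_of_lt ha hab)
  have hca := c_pos ht ht' ha
  have hcb := c_pos ht ht' hb
  have hca2 := c_sq ht ht' ha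
  have hcb2 := c_sq ht ht' hb
  set ca := Real.sqrt (a ^ 2 + 1 - 2 * a * t)
  set cb := Real.sqrt (b ^ 2 + 1 - 2 * b * t)
  rw [div_lt_div_iff₀ hcb hca]
  have hat : 0 < a - t := by linarith
  have hbt : 0 < b - t := by linarith
  have key : (a - t) * cb < (b - t) * ca := by
    have hsq : ((a - t) * cb) ^ 2 < ((b - t) * ca) ^ 2 := by
      have : ((a - t) * cb) ^ 2 = (a - t) ^ 2 * (b ^ 2 + 1 - 2 * b * t) := by
        rw [mul_pow, hcb2]
      rw [this]
      have : ((b - t) * ca) ^ 2 = (b - t) ^ 2 * (a ^ 2 + 1 - 2 * a * t) := by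
        rw [mul_pow, hca2]
      rw [this]
      have hs : (0:ℝ) < 1 - t ^ 2 := by nlinarith
      have hdd : (a - t) ^ 2 < (b - t) ^ 2 := by nlinarith
      nlinarith [mul_pos hs (sub_pos.2 hdd)]
    exact lt_of_pow_lt_pow_left₀ 2 (by positivity) hsq
  nlinarith [key]

/-- The second arccos argument is strictly increasing in `a`. -/
private lemma arg2_lt (ht : -1 < t) (ht' : t < 1) (ha : 1 ≤ a) (hab : a < b) :
    (a * t - 1) / Real.sqrt (a ^ 2 + 1 - 2 * a * t) <
      (b * t - 1) / Real.sqrt (b ^ 2 + 1 - 2 * b * t) := by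
  have hb : 1 ≤ b := le_of_lt (lt_of_le_of_lt ha hab)
  have hca := c_pos ht ht' ha
  have hcb := c_pos ht ht' hb
  have hca2 := c_sq ht ht' ha
  have hcb2 := c_sq ht ht' hb
  set ca := Real.sqrt (a ^ 2 + 1 - 2 * a * t)
  set cb := Real.sqrt (b ^ 2 + 1 - 2 * b * t)
  rw [div_lt_div_iff₀ hca hcb]
  rcases le_or_gt 1 (a * t) with hat | hat
  · -- both numerators nonnegative; here t > 0
    have htpos : 0 < t := by nlinarith
    have hbt : 1 ≤ b * t := by nlinarith
    have hsq : ((a * t - 1) * cb) ^ 2 < ((b * t - 1) * ca) ^ 2 := by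
      have e1 : ((a * t - 1) * cb) ^ 2 = (a * t - 1) ^ 2 * (b ^ 2 + 1 - 2 * b * t) := by
        rw [mul_pow, hcb2]
      have e2 : ((b * t - 1) * ca) ^ 2 = (b * t - 1) ^ 2 * (a ^ 2 + 1 - 2 * a * t) := by
        rw [mul_pow, hca2]
      rw [e1, e2]
      -- difference is (a-b)(1-t^2)(a+b-2abt) and a+b-2abt ≤ a-b < 0 since at ≥ 1
      have hs : (0:ℝ) < 1 - t ^ 2 := by nlinarith
      have hK : 0 < 2 * a * b * t - a - b := by
        nlinarith [mul_le_mul_of_nonneg_left hat (by linarith : (0:ℝ) ≤ 2 * b)]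
      nlinarith [mul_pos (mul_pos (sub_pos.2 hab) hs) hK]
    exact lt_of_pow_lt_pow_left₀ 2 (mul_nonneg (by linarith) hca.le) hsq
  · rcases le_or_gt 1 (b * t) with hbt | hbt
    · -- mixed signs
      have h1 : (a * t - 1) * cb < 0 := mul_neg_of_neg_of_pos (by linarith) hcb
      have h2 : 0 ≤ (b * t - 1) * ca := mul_nonneg (by linarith) hca.le
      linarith
    · -- both numerators negative
      have key : (1 - b * t) * ca < (1 - a * t) * cb := by
        have hsq : ((1 - b * t) * ca) ^ 2 < ((1 - a * t) * cb) ^ 2 := by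
          have e1 : ((1 - b * t) * ca) ^ 2 = (1 - b * t) ^ 2 * (a ^ 2 + 1 - 2 * a * t) := by
            rw [mul_pow, hca2]
          have e2 : ((1 - a * t) * cb) ^ 2 = (1 - a * t) ^ 2 * (b ^ 2 + 1 - 2 * b * t) := by
            rw [mul_pow, hcb2]
          rw [e1, e2]
          -- difference: (b-a)(1-t^2)(a+b-2abt) > 0 since bt < 1 gives a+b-2abt > b-a > 0
          have hs : (0:ℝ) < 1 - t ^ 2 := by nlinarith
          have hK : 0 < a + b - 2 * a * b * t := by
            nlinarith [mul_lt_mul_of_pos_left hbt (by linarith : (0:ℝ) < 2 * a)]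
          nlinarith [mul_pos (mul_pos (sub_pos.2 hab) hs) hK]
        exact lt_of_pow_lt_pow_left₀ 2 (mul_nonneg (by linarith) hcb.le) hsq
      nlinarith [key]

/-- `al` is at least 1 for `l ≥ 2`. -/
private lemma one_le_al {l : ℝ} (h : 2 ≤ l) : 1 ≤ al l := by
  have := Real.sqrt_nonneg (l ^ 2 - 4)
  unfold al; linarith

/-- `al` is strictly monotone on `[2, ∞)`. -/
private lemma al_lt_al {x y : ℝ} (hx : 2 ≤ x) (hxy : x < y) : al x < al y := by
  have h1 : x ^ 2 - 4 ≤ y ^ 2 - 4 := by nlinarith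
  have h2 : Real.sqrt (x ^ 2 - 4) ≤ Real.sqrt (y ^ 2 - 4) := Real.sqrt_le_sqrt h1
  unfold al; linarith

/-- For every `ε ∈ (0, 1)` and all integers `2 ≤ l₁ < l₂`, `K_ε(l₁) < K_ε(l₂)`. -/
theorem stmt_16 (ε : ℝ) (hε : ε ∈ Set.Ioo (0 : ℝ) 1)
    (l₁ l₂ : ℤ) (hl₁ : 2 ≤ l₁) (hl : l₁ < l₂) :
    Keps ε (l₁ : ℝ) < Keps ε (l₂ : ℝ) := by
  obtain ⟨hε0, hε1⟩ := hε
  have hθ0 : 0 < π * ε := mul_pos Real.pi_pos hε0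
  have hθπ : π * ε < π := by nlinarith [Real.pi_pos]
  have ht' : Real.cos (π * ε) < 1 := by
    have := Real.cos_lt_cos_of_nonneg_of_le_pi (le_refl 0) hθπ.le hθ0
    simpa using this
  have ht : -1 < Real.cos (π * ε) := by
    have := Real.cos_lt_cos_of_nonneg_of_le_pi hθ0.le (le_refl π) hθπ
    simpa using this
  set t := Real.cos (π * ε)
  have hl₁R : (2 : ℝ) ≤ (l₁ : ℝ) := by exact_mod_cast hl₁
  have hlR : (l₁ : ℝ) < (l₂ : ℝ) := by exact_mod_cast hl
  have ha : 1 ≤ al (l₁ : ℝ) := one_le_al hl₁R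
  have hab : al (l₁ : ℝ) < al (l₂ : ℝ) := al_lt_al hl₁R hlR
  set a := al (l₁ : ℝ)
  set b := al (l₂ : ℝ)
  have hb : 1 ≤ b := le_of_lt (lt_of_le_of_lt ha hab)
  have h1 : Real.arccos ((t - a) / Real.sqrt (a ^ 2 + 1 - 2 * a * t)) <
      Real.arccos ((t - b) / Real.sqrt (b ^ 2 + 1 - 2 * b * t)) :=
    Real.strictAntiOn_arccos (mem1 ht ht' hb) (mem1 ht ht' ha) (arg1_lt ht ht' ha hab)
  have h2 : Real.arccos ((b * t - 1) / Real.sqrt (b ^ 2 + 1 - 2 * b * t)) <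
      Real.arccos ((a * t - 1) / Real.sqrt (a ^ 2 + 1 - 2 * a * t)) :=
    Real.strictAntiOn_arccos (mem2 ht ht' ha) (mem2 ht ht' hb) (arg2_lt ht ht' ha hab)
  unfold Keps
  linarith
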